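/- In the closeness-reduction graph, for every choice of added edges A* ⊆ {(t,S_i) : S_i ∈ S}, every node v other than t and v_e satisfies D(G',v) > D(G',t) or D(G',v) > D(G',v_e); consequently the node of maximum closeness centrality in G' is always t or v_e. -/
import Mathlib

/-- Vertex type of the closeness-reduction graph built from a 3-Set Cover instance with
universe size `l`, family size `m` and parameter `k`:
`v_e = Sum.inl (Sum.inl ())`, `t = Sum.inl (Sum.inr ())`,
set nodes `S_i = Sum.inr (Sum.inl (Sum.inl i))`,
universe nodes `u_j = Sum.inr (Sum.inl (Sum.inr j))`,
nodes `w_j = Sum.inr (Sum.inr (Sum.inl j))`, and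
pendant nodes `x_i = Sum.inr (Sum.inr (Sum.inr i))`. -/
abbrev CVert (l m k : ℕ) :=
  (Unit ⊕ Unit) ⊕ (Fin m ⊕ Fin l) ⊕ (Fin l ⊕ Fin (l + m - k + 1))

/-- The closeness-reduction graph `G' = (V, E ∪ A*)` built from a 3-Set Cover instance
`(U, S, k)`, where `S i` is the `i`-th 3-element subset of the universe `Fin l` and the
set `A ⊆ Fin m` records the added edges `(t, S_i)` for `i ∈ A`.  Base edges: `(t, v_e)`;
`(x_i, t)` for all `i`; `(w_j, v_e)` and `(w_j, u_j)` for all `j`; `(S_i, v_e)` for all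
`i`; and `(S_i, u_j)` for `u_j ∈ S_i`. -/
def Cgraph (l m k : ℕ) (S : Fin m → Finset (Fin l)) (A : Finset (Fin m)) :
    SimpleGraph (CVert l m k) :=
  SimpleGraph.fromRel (fun a b =>
    match a, b with
    | Sum.inl (Sum.inl _), Sum.inl (Sum.inr _) => True
    | Sum.inr (Sum.inr (Sum.inr _)), Sum.inl (Sum.inr _) => True
    | Sum.inr (Sum.inr (Sum.inl _)), Sum.inl (Sum.inl _) => True
    | Sum.inr (Sum.inr (Sum.inl j)), Sum.inr (Sum.inl (Sum.inr j')) => j = j'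
    | Sum.inr (Sum.inl (Sum.inl _)), Sum.inl (Sum.inl _) => True
    | Sum.inr (Sum.inl (Sum.inl i)), Sum.inr (Sum.inl (Sum.inr j)) => j ∈ S i
    | Sum.inl (Sum.inr _), Sum.inr (Sum.inl (Sum.inl i)) => i ∈ A
    | _, _ => False)

/-- `D(G', v)`: the sum of shortest-path distances from `v` to all other nodes. -/
noncomputable def Dsum {l m k : ℕ} (G : SimpleGraph (CVert l m k)) (v : CVert l m k) : ℕ :=
  ∑ w : CVert l m k, G.dist v w

section DistLemmas
variable {V : Type*} {G : SimpleGraph V} {u v : V}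

lemma dist_ge_two (hr : G.Reachable u v) (hne : u ≠ v) (hadj : ¬ G.Adj u v) :
    2 ≤ G.dist u v := by
  have h1 := hr.pos_dist_of_ne hne
  by_contra h
  push_neg at h
  have : G.dist u v = 1 := by omega
  exact hadj (SimpleGraph.dist_eq_one_iff_adj.mp this)

lemma dist_ge_three (hr : G.Reachable u v) (hne : u ≠ v) (hadj : ¬ G.Adj u v)
    (hmid : ∀ z, G.Adj u z → ¬ G.Adj z v) : 3 ≤ G.dist u v := by
  have h2 := dist_ge_two hr hne hadj
  by_contra h
  push_neg at h
  have hd : G.dist u v = 2 := by omega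
  obtain ⟨p, hp⟩ := hr.exists_walk_length_eq_dist
  rw [hd] at hp
  cases p with
  | nil => simp at hp
  | cons h1 q =>
    cases q with
    | nil => simp at hp
    | cons hq r =>
      cases r with
      | nil => exact hmid _ h1 hq
      | cons _ _ => simp [SimpleGraph.Walk.length_cons] at hp

lemma dist_le_one (h : G.Adj u v) : G.dist u v ≤ 1 := by
  simpa using SimpleGraph.dist_le h.toWalk

lemma dist_le_two (z : V) (h1 : G.Adj u z) (h2 : G.Adj z v) : G.dist u v ≤ 2 := by
  simpa using SimpleGraph.dist_le (SimpleGraph.Walk.cons h1 h2.toWalk)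

lemma dist_le_three (z z' : V) (h1 : G.Adj u z) (h2 : G.Adj z z') (h3 : G.Adj z' v) :
    G.dist u v ≤ 3 := by
  simpa using SimpleGraph.dist_le (SimpleGraph.Walk.cons h1 (SimpleGraph.Walk.cons h2 h3.toWalk))

end DistLemmas

lemma sum_ite_card {α : Type*} [Fintype α] [DecidableEq α] (s : Finset α) (a b : ℕ) :
    (∑ x : α, if x ∈ s then a else b) = s.card * a + (Fintype.card α - s.card) * b := by
  rw [Finset.sum_ite, Finset.sum_const, Finset.sum_const]
  have h1 : Finset.univ.filter (· ∈ s) = s := by ext x; simp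
  have h2 : (Finset.univ.filter (¬ · ∈ s)).card = Fintype.card α - s.card := by
    have := Finset.card_filter_add_card_filter_not (s := Finset.univ) (p := (· ∈ s))
    simp only [Finset.card_univ] at this
    rw [h1] at this
    omega
  rw [h1, h2, smul_eq_mul, smul_eq_mul]

namespace Creduction

variable {l m k : ℕ} {S : Fin m → Finset (Fin l)} {A : Finset (Fin m)}

/-- vertex-indexed ℕ-valued function combinator -/
def vfun (l m k : ℕ) (a b : ℕ) (fS : Fin m → ℕ) (fu fw : Fin l → ℕ)
    (fx : Fin (l + m - k + 1) → ℕ) : CVert l m k → ℕ :=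
  Sum.elim (Sum.elim (fun _ => a) (fun _ => b))
    (Sum.elim (Sum.elim fS fu) (Sum.elim fw fx))

lemma sum_vfun (a b : ℕ) (fS : Fin m → ℕ) (fu fw : Fin l → ℕ)
    (fx : Fin (l + m - k + 1) → ℕ) :
    ∑ w : CVert l m k, vfun l m k a b fS fu fw fx w =
      a + b + ((∑ i, fS i) + (∑ j, fu j)) + ((∑ j, fw j) + (∑ q, fx q)) := by
  simp [vfun, Fintype.sum_sum_type]
  ring

lemma creach (w : CVert l m k) :
    (Cgraph l m k S A).Reachable (Sum.inl (Sum.inl ())) w := by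
  have hvt : (Cgraph l m k S A).Adj (Sum.inl (Sum.inl ())) (Sum.inl (Sum.inr ())) := by
    simp [Cgraph]
  obtain ((⟨⟩ | ⟨⟩) | ((i | j) | (j | q))) := w
  · exact SimpleGraph.Reachable.refl _
  · exact hvt.reachable
  · exact (show (Cgraph l m k S A).Adj (Sum.inl (Sum.inl ())) (Sum.inr (Sum.inl (Sum.inl i)))
      by simp [Cgraph]).reachable
  · exact ((show (Cgraph l m k S A).Adj (Sum.inl (Sum.inl ())) (Sum.inr (Sum.inr (Sum.inl j)))
      by simp [Cgraph]).reachable).trans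
      (show (Cgraph l m k S A).Adj (Sum.inr (Sum.inr (Sum.inl j))) (Sum.inr (Sum.inl (Sum.inr j)))
      by simp [Cgraph]).reachable
  · exact (show (Cgraph l m k S A).Adj (Sum.inl (Sum.inl ())) (Sum.inr (Sum.inr (Sum.inl j)))
      by simp [Cgraph]).reachable
  · exact hvt.reachable.trans
      (show (Cgraph l m k S A).Adj (Sum.inl (Sum.inr ())) (Sum.inr (Sum.inr (Sum.inr q)))
      by simp [Cgraph]).reachable

lemma creachAll (a b : CVert l m k) : (Cgraph l m k S A).Reachable a b :=
  (creach a).symm.trans (creach b)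

lemma adj_to_x {z : CVert l m k} {q : Fin (l + m - k + 1)}
    (h : (Cgraph l m k S A).Adj z (Sum.inr (Sum.inr (Sum.inr q)))) :
    z = Sum.inl (Sum.inr ()) := by
  obtain ((⟨⟩ | ⟨⟩) | ((i | j) | (j | q'))) := z <;>
    first
      | rfl
      | (exfalso; simp [Cgraph] at h)

/-- upper bound on `D(ve)` -/
lemma D_ve_ub (hkm : k ≤ m) :
    Dsum (Cgraph l m k S A) (Sum.inl (Sum.inl ())) ≤ 5 * l + 3 * m - 2 * k + 3 := by
  have hpt : ∀ w : CVert l m k, (Cgraph l m k S A).dist (Sum.inl (Sum.inl ())) w ≤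
      vfun l m k 0 1 (fun _ => 1) (fun _ => 2) (fun _ => 1) (fun _ => 2) w := by
    intro w
    obtain ((⟨⟩ | ⟨⟩) | ((i | j) | (j | q))) := w
    · exact le_of_eq SimpleGraph.dist_self
    · exact dist_le_one (by simp [Cgraph])
    · exact dist_le_one (by simp [Cgraph])
    · exact dist_le_two (Sum.inr (Sum.inr (Sum.inl j))) (by simp [Cgraph]) (by simp [Cgraph])
    · exact dist_le_one (by simp [Cgraph])
    · exact dist_le_two (Sum.inl (Sum.inr ())) (by simp [Cgraph]) (by simp [Cgraph])
  have := Finset.sum_le_sum (s := Finset.univ) (fun w _ => hpt w)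
  rw [sum_vfun] at this
  simp only [Finset.sum_const, Finset.card_univ, Fintype.card_fin, smul_eq_mul] at this
  rw [Dsum]
  omega

/-- upper bound on `D(t)` when some `i ∈ A` -/
lemma D_t_ub (hl3 : 3 ≤ l) (hk : 1 ≤ k) (hkm : k ≤ m) (i : Fin m) (hiA : i ∈ A)
    (h3i : (S i).card = 3) :
    Dsum (Cgraph l m k S A) (Sum.inl (Sum.inr ())) ≤ 6 * l + 3 * m - k - 2 := by
  have hpt : ∀ w : CVert l m k, (Cgraph l m k S A).dist (Sum.inl (Sum.inr ())) w ≤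
      vfun l m k 1 0 (fun i' => if i' ∈ ({i} : Finset (Fin m)) then 1 else 2)
        (fun j => if j ∈ S i then 2 else 3) (fun _ => 2) (fun _ => 1) w := by
    intro w
    obtain ((⟨⟩ | ⟨⟩) | ((i' | j) | (j | q))) := w
    · exact dist_le_one (by simp [Cgraph])
    · exact le_of_eq SimpleGraph.dist_self
    · show (Cgraph l m k S A).dist _ _ ≤ if i' ∈ ({i} : Finset (Fin m)) then 1 else 2
      by_cases hi' : i' ∈ ({i} : Finset (Fin m))
      · rw [if_pos hi']
        rw [Finset.mem_singleton] at hi'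
        subst hi'
        exact dist_le_one (by simp [Cgraph, hiA])
      · rw [if_neg hi']
        exact dist_le_two (Sum.inl (Sum.inl ())) (by simp [Cgraph]) (by simp [Cgraph])
    · show (Cgraph l m k S A).dist _ _ ≤ if j ∈ S i then 2 else 3
      by_cases hj : j ∈ S i
      · rw [if_pos hj]
        exact dist_le_two (Sum.inr (Sum.inl (Sum.inl i))) (by simp [Cgraph, hiA])
          (by simp [Cgraph, hj])
      · rw [if_neg hj]
        exact dist_le_three (Sum.inl (Sum.inl ())) (Sum.inr (Sum.inr (Sum.inl j)))
          (by simp [Cgraph]) (by simp [Cgraph]) (by simp [Cgraph])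
    · exact dist_le_two (Sum.inl (Sum.inl ())) (by simp [Cgraph]) (by simp [Cgraph])
    · exact dist_le_one (by simp [Cgraph])
  have := Finset.sum_le_sum (s := Finset.univ) (fun w _ => hpt w)
  rw [sum_vfun, sum_ite_card, sum_ite_card] at this
  simp only [Finset.sum_const, Finset.card_univ, Fintype.card_fin, smul_eq_mul,
    Finset.card_singleton, h3i] at this
  rw [Dsum]
  omega

/-- lower bound on `D(x_q)` -/
lemma D_x_lb (hkm : k ≤ m) (q : Fin (l + m - k + 1)) :
    6 * l + 4 * m - 2 * k + 3 ≤ Dsum (Cgraph l m k S A) (Sum.inr (Sum.inr (Sum.inr q))) := by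
  have hpt : ∀ w : CVert l m k,
      vfun l m k 2 1 (fun _ => 2) (fun _ => 2) (fun _ => 2)
        (fun q' => if q' ∈ ({q} : Finset (Fin (l + m - k + 1))) then 0 else 2) w ≤
      (Cgraph l m k S A).dist (Sum.inr (Sum.inr (Sum.inr q))) w := by
    intro w
    obtain ((⟨⟩ | ⟨⟩) | ((i | j) | (j | q'))) := w
    · exact dist_ge_two (creachAll _ _) (by simp) (by simp [Cgraph])
    · exact (creachAll _ _).pos_dist_of_ne (by simp)
    · exact dist_ge_two (creachAll _ _) (by simp) (by simp [Cgraph])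
    · exact dist_ge_two (creachAll _ _) (by simp) (by simp [Cgraph])
    · exact dist_ge_two (creachAll _ _) (by simp) (by simp [Cgraph])
    · show (if q' ∈ ({q} : Finset (Fin (l + m - k + 1))) then 0 else 2) ≤ _
      by_cases hq : q' ∈ ({q} : Finset (Fin (l + m - k + 1)))
      · rw [if_pos hq]; exact Nat.zero_le _
      · rw [if_neg hq]
        rw [Finset.mem_singleton] at hq
        refine dist_ge_two (creachAll _ _) (by simp; exact fun h => hq h.symm)
          (by simp [Cgraph])
  have := Finset.sum_le_sum (s := Finset.univ) (fun w _ => hpt w)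
  rw [sum_vfun, sum_ite_card] at this
  simp only [Finset.sum_const, Finset.card_univ, Fintype.card_fin, smul_eq_mul,
    Finset.card_singleton] at this
  rw [Dsum]
  omega

/-- lower bound on `D(u_j)` -/
lemma D_u_lb (hkm : k ≤ m) (j : Fin l) :
    5 * l + 3 * m - 2 * k + 4 ≤ Dsum (Cgraph l m k S A) (Sum.inr (Sum.inl (Sum.inr j))) := by
  have hpt : ∀ w : CVert l m k,
      vfun l m k 2 2 (fun _ => 1)
        (fun j' => if j' ∈ ({j} : Finset (Fin l)) then 0 else 2) (fun _ => 1) (fun _ => 2) w ≤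
      (Cgraph l m k S A).dist (Sum.inr (Sum.inl (Sum.inr j))) w := by
    intro w
    obtain ((⟨⟩ | ⟨⟩) | ((i | j') | (j' | q))) := w
    · exact dist_ge_two (creachAll _ _) (by simp) (by simp [Cgraph])
    · exact dist_ge_two (creachAll _ _) (by simp) (by simp [Cgraph])
    · exact (creachAll _ _).pos_dist_of_ne (by simp)
    · show (if j' ∈ ({j} : Finset (Fin l)) then 0 else 2) ≤ _
      by_cases hj : j' ∈ ({j} : Finset (Fin l))
      · rw [if_pos hj]; exact Nat.zero_le _
      · rw [if_neg hj]
        rw [Finset.mem_singleton] at hj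
        refine dist_ge_two (creachAll _ _) (by simp; exact fun h => hj h.symm)
          (by simp [Cgraph])
    · exact (creachAll _ _).pos_dist_of_ne (by simp)
    · exact dist_ge_two (creachAll _ _) (by simp) (by simp [Cgraph])
  have := Finset.sum_le_sum (s := Finset.univ) (fun w _ => hpt w)
  rw [sum_vfun, sum_ite_card] at this
  simp only [Finset.sum_const, Finset.card_univ, Fintype.card_fin, smul_eq_mul,
    Finset.card_singleton] at this
  rw [Dsum]
  omega

/-- lower bound on `D(w_j)` -/
lemma D_w_lb (hk : 1 ≤ k) (hkm : k ≤ m) (j : Fin l) :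
    5 * l + 4 * m - 2 * k + 3 ≤ Dsum (Cgraph l m k S A) (Sum.inr (Sum.inr (Sum.inl j))) := by
  have hpt : ∀ w : CVert l m k,
      vfun l m k 1 2 (fun _ => 2) (fun _ => 1)
        (fun j' => if j' ∈ ({j} : Finset (Fin l)) then 0 else 2) (fun _ => 2) w ≤
      (Cgraph l m k S A).dist (Sum.inr (Sum.inr (Sum.inl j))) w := by
    intro w
    obtain ((⟨⟩ | ⟨⟩) | ((i | j') | (j' | q))) := w
    · exact (creachAll _ _).pos_dist_of_ne (by simp)
    · exact dist_ge_two (creachAll _ _) (by simp) (by simp [Cgraph])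
    · exact dist_ge_two (creachAll _ _) (by simp) (by simp [Cgraph])
    · exact (creachAll _ _).pos_dist_of_ne (by simp)
    · show (if j' ∈ ({j} : Finset (Fin l)) then 0 else 2) ≤ _
      by_cases hj : j' ∈ ({j} : Finset (Fin l))
      · rw [if_pos hj]; exact Nat.zero_le _
      · rw [if_neg hj]
        rw [Finset.mem_singleton] at hj
        refine dist_ge_two (creachAll _ _) (by simp; exact fun h => hj h.symm)
          (by simp [Cgraph])
    · exact dist_ge_two (creachAll _ _) (by simp) (by simp [Cgraph])
  have := Finset.sum_le_sum (s := Finset.univ) (fun w _ => hpt w)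
  rw [sum_vfun, sum_ite_card] at this
  simp only [Finset.sum_const, Finset.card_univ, Fintype.card_fin, smul_eq_mul,
    Finset.card_singleton] at this
  rw [Dsum]
  omega

/-- lower bound on `D(S_i)` (any `i`) -/
lemma D_S_lb (hl3 : 3 ≤ l) (hkm : k ≤ m) (i : Fin m) (h3i : (S i).card = 3) :
    6 * l + 4 * m - 2 * k - 1 ≤ Dsum (Cgraph l m k S A) (Sum.inr (Sum.inl (Sum.inl i))) := by
  have hpt : ∀ w : CVert l m k,
      vfun l m k 1 1 (fun i' => if i' ∈ ({i} : Finset (Fin m)) then 0 else 2)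
        (fun j => if j ∈ S i then 1 else 2) (fun _ => 2) (fun _ => 2) w ≤
      (Cgraph l m k S A).dist (Sum.inr (Sum.inl (Sum.inl i))) w := by
    intro w
    obtain ((⟨⟩ | ⟨⟩) | ((i' | j) | (j | q))) := w
    · exact (creachAll _ _).pos_dist_of_ne (by simp)
    · exact (creachAll _ _).pos_dist_of_ne (by simp)
    · show (if i' ∈ ({i} : Finset (Fin m)) then 0 else 2) ≤ _
      by_cases hi' : i' ∈ ({i} : Finset (Fin m))
      · rw [if_pos hi']; exact Nat.zero_le _
      · rw [if_neg hi']
        rw [Finset.mem_singleton] at hi'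
        refine dist_ge_two (creachAll _ _) (by simp; exact fun h => hi' h.symm)
          (by simp [Cgraph])
    · show (if j ∈ S i then 1 else 2) ≤ _
      by_cases hj : j ∈ S i
      · rw [if_pos hj]
        exact (creachAll _ _).pos_dist_of_ne (by simp)
      · rw [if_neg hj]
        exact dist_ge_two (creachAll _ _) (by simp) (by simp [Cgraph, hj])
    · exact dist_ge_two (creachAll _ _) (by simp) (by simp [Cgraph])
    · exact dist_ge_two (creachAll _ _) (by simp) (by simp [Cgraph])
  have := Finset.sum_le_sum (s := Finset.univ) (fun w _ => hpt w)
  rw [sum_vfun, sum_ite_card, sum_ite_card] at this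
  simp only [Finset.sum_const, Finset.card_univ, Fintype.card_fin, smul_eq_mul,
    Finset.card_singleton, h3i] at this
  rw [Dsum]
  omega

/-- lower bound on `D(S_i)` when `i ∉ A` -/
lemma D_S_notA_lb (hl3 : 3 ≤ l) (hkm : k ≤ m) (i : Fin m) (hiA : i ∉ A)
    (h3i : (S i).card = 3) :
    7 * l + 5 * m - 3 * k + 1 ≤ Dsum (Cgraph l m k S A) (Sum.inr (Sum.inl (Sum.inl i))) := by
  have hpt : ∀ w : CVert l m k,
      vfun l m k 1 2 (fun i' => if i' ∈ ({i} : Finset (Fin m)) then 0 else 2)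
        (fun j => if j ∈ S i then 1 else 2) (fun _ => 2) (fun _ => 3) w ≤
      (Cgraph l m k S A).dist (Sum.inr (Sum.inl (Sum.inl i))) w := by
    intro w
    obtain ((⟨⟩ | ⟨⟩) | ((i' | j) | (j | q))) := w
    · exact (creachAll _ _).pos_dist_of_ne (by simp)
    · exact dist_ge_two (creachAll _ _) (by simp) (by simp [Cgraph, hiA])
    · show (if i' ∈ ({i} : Finset (Fin m)) then 0 else 2) ≤ _
      by_cases hi' : i' ∈ ({i} : Finset (Fin m))
      · rw [if_pos hi']; exact Nat.zero_le _
      · rw [if_neg hi']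
        rw [Finset.mem_singleton] at hi'
        refine dist_ge_two (creachAll _ _) (by simp; exact fun h => hi' h.symm)
          (by simp [Cgraph])
    · show (if j ∈ S i then 1 else 2) ≤ _
      by_cases hj : j ∈ S i
      · rw [if_pos hj]
        exact (creachAll _ _).pos_dist_of_ne (by simp)
      · rw [if_neg hj]
        exact dist_ge_two (creachAll _ _) (by simp) (by simp [Cgraph, hj])
    · exact dist_ge_two (creachAll _ _) (by simp) (by simp [Cgraph])
    · refine dist_ge_three (creachAll _ _) (by simp) (by simp [Cgraph]) ?_
      intro z h1 h2
      have hz := adj_to_x h2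
      subst hz
      simp [Cgraph, hiA] at h1
  have := Finset.sum_le_sum (s := Finset.univ) (fun w _ => hpt w)
  rw [sum_vfun, sum_ite_card, sum_ite_card] at this
  simp only [Finset.sum_const, Finset.card_univ, Fintype.card_fin, smul_eq_mul,
    Finset.card_singleton, h3i] at this
  rw [Dsum]
  omega

end Creduction

/-- For every choice of added edges `A* ⊆ {(t, S_i) : S_i ∈ S}`, every node `v` other
than `t` and `v_e` satisfies `D(G',v) > D(G',t)` or `D(G',v) > D(G',v_e)`; consequently
the node of maximum closeness centrality (i.e. minimum distance sum) in `G'` is always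
`t` or `v_e`. -/

theorem max_closeness_t_or_evader (l m k : ℕ) (hl : 1 ≤ l) (hk : 1 ≤ k) (hkm : k ≤ m)
    (S : Fin m → Finset (Fin l)) (h3 : ∀ i, (S i).card = 3) (A : Finset (Fin m)) :
    let G' := Cgraph l m k S A
    let ve : CVert l m k := Sum.inl (Sum.inl ())
    let t : CVert l m k := Sum.inl (Sum.inr ())
    (∀ v : CVert l m k, v ≠ t → v ≠ ve →
        Dsum G' t < Dsum G' v ∨ Dsum G' ve < Dsum G' v) ∧
      (∀ v : CVert l m k, (∀ w : CVert l m k, Dsum G' v ≤ Dsum G' w) →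
        v = t ∨ v = ve) := by
  intro G' ve t
  have hm : 0 < m := hk.trans hkm
  have hl3 : 3 ≤ l := by
    have h := h3 ⟨0, hm⟩
    have h2 := Finset.card_le_univ (S ⟨0, hm⟩)
    simp only [Finset.card_univ, Fintype.card_fin, h] at h2
    exact h2
  have main : ∀ v : CVert l m k, v ≠ Sum.inl (Sum.inr ()) → v ≠ Sum.inl (Sum.inl ()) →
      Dsum (Cgraph l m k S A) (Sum.inl (Sum.inr ())) < Dsum (Cgraph l m k S A) v ∨
      Dsum (Cgraph l m k S A) (Sum.inl (Sum.inl ())) < Dsum (Cgraph l m k S A) v := by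
    intro v hvt hve
    have hveub := Creduction.D_ve_ub (S := S) (A := A) hkm
    obtain ((⟨⟩ | ⟨⟩) | ((i | j) | (j | q))) := v
    · exact absurd rfl hve
    · exact absurd rfl hvt
    · by_cases hiA : i ∈ A
      · left
        have h1 := Creduction.D_t_ub hl3 hk hkm i hiA (h3 i)
        have h2 := Creduction.D_S_lb (A := A) hl3 hkm i (h3 i)
        omega
      · right
        have h2 := Creduction.D_S_notA_lb hl3 hkm i hiA (h3 i)
        omega
    · right
      have h2 := Creduction.D_u_lb (S := S) (A := A) hkm j
      omega
    · right
      have h2 := Creduction.D_w_lb (S := S) (A := A) hk hkm j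
      omega
    · right
      have h2 := Creduction.D_x_lb (S := S) (A := A) hkm q
      omega
  have part2 : ∀ v : CVert l m k,
      (∀ w : CVert l m k, Dsum (Cgraph l m k S A) v ≤ Dsum (Cgraph l m k S A) w) →
      v = Sum.inl (Sum.inr ()) ∨ v = Sum.inl (Sum.inl ()) := by
    intro v hminv
    by_contra hcon
    push_neg at hcon
    rcases main v hcon.1 hcon.2 with h | h
    · exact absurd (hminv (Sum.inl (Sum.inr ()))) (by omega)
    · exact absurd (hminv (Sum.inl (Sum.inl ()))) (by omega)
  exact ⟨main, part2⟩
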